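/- For any n ≥ 2, the complex 0 → S_{n−2} →^{(−g,f)ᵀ} S_{n−1} ⊕ S_{n−1} →^{(f g)} S_n →^ε R is acyclic and gives a minimal free resolution of Iⁿ, where S_d denotes the R-module of degree-d homogeneous polynomials in S = R[A,B,C], and ε substitutes a, b, c for A, B, C. -/

import Mathlib

/-!
Write `f` and `g` as the linear forms with coefficient vectors `p = (xᵅ, y^β, z^γ)` and
`q = (y^β', z^γ', xᵅ')`; then `(a, b, c)` is the cross product `q × p`, so `f` and `g` vanish
at `(a, b, c)`, and `L := q₀ f - p₀ g = c X₁ - b X₂` does not involve `X₀`.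

All regularity statements needed in `S = R[X₀, X₁, X₂]` reduce to the regular sequences
`(xᵅ, y^β, z^γ)`, `(xᵅ, y^β', z^γ)` and `(c, b, z)` of the Cohen–Macaulay ring `R`, using two
tools: McCoy's theorem (a polynomial one of whose coefficients is regular modulo `J` is regular
modulo `J S`, also after singling out `X₀` as the variable over `R[X₁, X₂]`), and the swap
`u` regular mod `K`, `v` regular mod `K + (u)` ⟹ `u` regular mod `K + (v)`.
This shows that `f` is a nonzerodivisor and `g` is regular modulo `f` (exactness on the left),
that `xᵅ` is regular modulo `(f, g)`, and that `c` is regular modulo `L`.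

For exactness at `S_n`, let `w` be homogeneous of degree `n` with `w(a, b, c) = 0`. By
homogeneity `x^{αn} w = w(xᵅ X)`, which modulo `f` is `w` evaluated at
`(-(y^β X₁ + z^γ X₂), xᵅ X₁, xᵅ X₂)`; multiplied by `cⁿ` and taken modulo `L`, this becomes
`w(xᵅ X₂ (a, b, c)) = 0`. Cancelling `cⁿ` modulo `L ∈ (f, g)` and then `x^{αn}` modulo `(f, g)`
gives `w ∈ (f, g)`. Finally `Iⁿ` is spanned by the values at `(a, b, c)` of the monomials of
degree `n`, and minimality holds because all coefficients of `f` and `g` lie in the maximal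
ideal.
-/

open MvPolynomial
open scoped nonZeroDivisors

section RegularModulo

variable {A : Type*} [CommRing A]

theorem IsSMulRegular.mem_of_mul_mem {J : Ideal A} {u s : A} (hu : IsSMulRegular (A ⧸ J) u)
    (h : u * s ∈ J) : s ∈ J :=
  mem_of_isSMulRegular_quotient_of_smul_mem hu h

theorem isSMulRegular_quotient_of_mul_mem {J : Ideal A} {u : A} (h : ∀ s, u * s ∈ J → s ∈ J) :
    IsSMulRegular (A ⧸ J) u :=
  (isSMulRegular_quotient_iff_mem_of_smul_mem J u).2 h

theorem isSMulRegular_quotient_bot_iff {u : A} :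
    IsSMulRegular (A ⧸ (⊥ : Ideal A)) u ↔ u ∈ A⁰ := by
  rw [isSMulRegular_quotient_iff_mem_of_smul_mem, mem_nonZeroDivisors_iff_left]
  simp

theorem IsSMulRegular.of_sub_mem {J : Ideal A} {u v : A} (hu : IsSMulRegular (A ⧸ J) u)
    (huv : u - v ∈ J) : IsSMulRegular (A ⧸ J) v :=
  isSMulRegular_quotient_of_mul_mem fun s hs ↦ hu.mem_of_mul_mem <| by
    simpa [sub_mul] using J.add_mem (J.mul_mem_right s huv) hs

theorem IsSMulRegular.mk_mem_nonZeroDivisors {J : Ideal A} {r : A}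
    (h : IsSMulRegular (A ⧸ J) r) : Ideal.Quotient.mk J r ∈ (A ⧸ J)⁰ := by
  refine mem_nonZeroDivisors_iff_left.2 fun s hs ↦ ?_
  obtain ⟨s, rfl⟩ := Ideal.Quotient.mk_surjective s
  rw [← map_mul, Ideal.Quotient.eq_zero_iff_mem] at hs
  exact Ideal.Quotient.eq_zero_iff_mem.2 (h.mem_of_mul_mem hs)

theorem IsSMulRegular.of_quotient_map_equiv {B E : Type*} [CommRing B] [EquivLike E A B]
    [RingEquivClass E A B] (e : E) {J : Ideal A} {r : A}
    (h : IsSMulRegular (B ⧸ J.map e) (e r)) : IsSMulRegular (A ⧸ J) r :=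
  isSMulRegular_quotient_of_mul_mem fun s hs ↦ by
    obtain ⟨s', hs', hss'⟩ := (Ideal.mem_map_of_equiv e _).1 <|
      h.mem_of_mul_mem (s := e s) (by rw [← map_mul]; exact Ideal.mem_map_of_mem e hs)
    rwa [EquivLike.injective e hss'] at hs'

theorem IsSMulRegular.quotient_sup_span_swap {K : Ideal A} {u v : A}
    (hu : IsSMulRegular (A ⧸ K) u) (hv : IsSMulRegular (A ⧸ (K ⊔ Ideal.span {u})) v) :
    IsSMulRegular (A ⧸ (K ⊔ Ideal.span {v})) u := by
  refine isSMulRegular_quotient_of_mul_mem fun r hr ↦ ?_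
  obtain ⟨k, hk, _, hs, hks⟩ := Submodule.mem_sup.1 hr
  obtain ⟨s, rfl⟩ := Ideal.mem_span_singleton'.1 hs
  have hs : s ∈ K ⊔ Ideal.span {u} := hv.mem_of_mul_mem <| by
    refine Submodule.mem_sup.2 ⟨-k, K.neg_mem hk, r * u, Ideal.mem_span_singleton'.2 ⟨r, rfl⟩, ?_⟩
    linear_combination -hks
  obtain ⟨k', hk', _, ht, rfl⟩ := Submodule.mem_sup.1 hs
  obtain ⟨t, rfl⟩ := Ideal.mem_span_singleton'.1 ht
  have hrt : r - t * v ∈ K := hu.mem_of_mul_mem <| by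
    convert K.add_mem hk (K.mul_mem_left v hk') using 1
    linear_combination -hks
  exact Submodule.mem_sup.2 ⟨_, hrt, t * v, Ideal.mem_span_singleton'.2 ⟨t, rfl⟩, by ring⟩

theorem isSMulRegular_quotient_span_swap {u v : A} (hu : u ∈ A⁰)
    (hv : IsSMulRegular (A ⧸ Ideal.span {u}) v) : IsSMulRegular (A ⧸ Ideal.span {v}) u := by
  have := IsSMulRegular.quotient_sup_span_swap (isSMulRegular_quotient_bot_iff.2 hu)
    (by rwa [bot_sup_eq])
  rwa [bot_sup_eq] at this

theorem exists_eq_of_mul_add_mul_eq_zero {u v p q : A} (hu : u ∈ A⁰)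
    (hv : IsSMulRegular (A ⧸ Ideal.span {u}) v) (h : u * p + v * q = 0) :
    ∃ t, p = v * t ∧ q = -(u * t) := by
  obtain ⟨t, rfl⟩ := Ideal.mem_span_singleton'.1 <|
    hv.mem_of_mul_mem (s := q) (Ideal.mem_span_singleton'.2 ⟨-p, by linear_combination -h⟩)
  refine ⟨-t, ?_, by ring⟩
  have : u * (p - v * -t) = 0 := by linear_combination h
  linear_combination (mul_left_mem_nonZeroDivisors_eq_zero_iff hu).1 this

theorem RingTheory.Sequence.IsWeaklyRegular.regular_mod_of_triple {u v w : A}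
    (h : IsWeaklyRegular A [u, v, w]) :
    u ∈ A⁰ ∧ IsSMulRegular (A ⧸ Ideal.span {u}) v ∧ IsSMulRegular (A ⧸ Ideal.span {u, v}) w := by
  have h0 := h.regular_mod_prev 0 (by simp)
  have h1 := h.regular_mod_prev 1 (by simp)
  have h2 := h.regular_mod_prev 2 (by simp)
  rw [isSMulRegular_quotient_iff_mem_of_smul_mem] at h0 h1 h2
  simp only [List.take_zero, List.take_succ_cons, Ideal.ofList_nil, Ideal.ofList_cons,
    smul_eq_mul, Ideal.mul_top, Submodule.mem_bot, bot_le, sup_of_le_left,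
    List.getElem_cons_zero, List.getElem_cons_succ] at h0 h1 h2
  rw [Ideal.span_insert]
  exact ⟨mem_nonZeroDivisors_iff_left.2 h0, isSMulRegular_quotient_of_mul_mem h1,
    isSMulRegular_quotient_of_mul_mem h2⟩

end RegularModulo

section Coefficients

variable {R : Type*} [CommRing R]

theorem mem_nonZeroDivisors_of_ringEquiv {B : Type*} [CommRing B] (e : R ≃+* B) {r : R}
    (h : e r ∈ B⁰) : r ∈ R⁰ := by
  simpa using (MulEquivClass.map_nonZeroDivisors e.symm).le (Submonoid.mem_map_of_mem _ h)

theorem MvPolynomial.mem_nonZeroDivisors_of_coeff_mem {k : ℕ} {p : MvPolynomial (Fin k) R}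
    (d : Fin k →₀ ℕ) (hd : p.coeff d ∈ R⁰) : p ∈ (MvPolynomial (Fin k) R)⁰ := by
  induction k with
  | zero =>
    refine mem_nonZeroDivisors_of_ringEquiv (isEmptyRingEquiv R (Fin 0)) ?_
    rwa [Subsingleton.elim d 0] at hd
  | succ k ih =>
    refine mem_nonZeroDivisors_of_ringEquiv (finSuccEquiv R k).toRingEquiv ?_
    refine Polynomial.mem_nonzeroDivisors_of_coeff_mem (d 0) (ih d.tail ?_)
    rwa [AlgEquiv.coe_ringEquiv, finSuccEquiv_coeff_coeff, Finsupp.cons_tail]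

theorem MvPolynomial.C_mem_nonZeroDivisors {k : ℕ} {r : R} (hr : r ∈ R⁰) :
    (C r : MvPolynomial (Fin k) R) ∈ (MvPolynomial (Fin k) R)⁰ :=
  mem_nonZeroDivisors_of_coeff_mem 0 (by simpa using hr)

theorem MvPolynomial.isSMulRegular_quotient_map_C {k : ℕ} {J : Ideal R}
    {p : MvPolynomial (Fin k) R} (d : Fin k →₀ ℕ) (hd : IsSMulRegular (R ⧸ J) (p.coeff d)) :
    IsSMulRegular (MvPolynomial (Fin k) R ⧸ J.map C) p := by
  have hp : map (Ideal.Quotient.mk J) p ∈ _⁰ :=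
    mem_nonZeroDivisors_of_coeff_mem d (by rw [coeff_map]; exact hd.mk_mem_nonZeroDivisors)
  refine isSMulRegular_quotient_of_mul_mem fun s hs ↦ ?_
  rw [← Ideal.mk_ker (I := J), ← ker_map, RingHom.mem_ker, map_mul] at hs
  rw [← Ideal.mk_ker (I := J), ← ker_map, RingHom.mem_ker]
  exact (mul_left_mem_nonZeroDivisors_eq_zero_iff hp).1 hs

theorem Polynomial.isSMulRegular_quotient_map_C {J : Ideal R} {p : Polynomial R} (i : ℕ)
    (hi : IsSMulRegular (R ⧸ J) (p.coeff i)) : IsSMulRegular (Polynomial R ⧸ J.map C) p := by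
  have hp : Polynomial.map (Ideal.Quotient.mk J) p ∈ _⁰ :=
    mem_nonzeroDivisors_of_coeff_mem i (by rw [coeff_map]; exact hi.mk_mem_nonZeroDivisors)
  refine isSMulRegular_quotient_of_mul_mem fun s hs ↦ ?_
  rw [← Ideal.mk_ker (I := J), ← ker_mapRingHom, RingHom.mem_ker, map_mul] at hs
  rw [← Ideal.mk_ker (I := J), ← ker_mapRingHom, RingHom.mem_ker]
  exact (mul_left_mem_nonZeroDivisors_eq_zero_iff hp).1 hs

theorem MvPolynomial.map_C_span_singleton {σ : Type*} (r : R) :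
    (Ideal.span {r}).map (C : R →+* MvPolynomial σ R) = Ideal.span {C r} := by
  rw [Ideal.map_span, Set.image_singleton]

end Coefficients

section Homogeneous

variable {R σ : Type*} [CommRing R]

theorem MvPolynomial.IsHomogeneous.aeval_mul {S : Type*} [CommRing S] [Algebra R S]
    {w : MvPolynomial σ R} {n : ℕ} (hw : w.IsHomogeneous n) (r : S) (φ : σ → S) :
    MvPolynomial.aeval (fun i ↦ r * φ i) w = r ^ n * MvPolynomial.aeval φ w := by
  simp only [aeval_def, eval₂_eq, Finset.mul_sum]
  refine Finset.sum_congr rfl fun d hd ↦ ?_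
  rw [Finset.prod_congr rfl fun i _ ↦ mul_pow r (φ i) (d i), Finset.prod_mul_distrib,
    Finset.prod_pow_eq_pow_sum, ← hw.degree_eq_sum_deg_support hd]
  ring

theorem MvPolynomial.aeval_sub_aeval_mem {S : Type*} [CommRing S] [Algebra R S] {J : Ideal S}
    {φ ψ : σ → S} (h : ∀ i, φ i - ψ i ∈ J) (w : MvPolynomial σ R) :
    aeval φ w - aeval ψ w ∈ J := by
  rw [← Ideal.Quotient.eq, ← Ideal.Quotient.mkₐ_eq_mk R, ← AlgHom.comp_apply,
    ← AlgHom.comp_apply]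
  congr 1
  ext i
  simpa [Ideal.Quotient.eq] using h i

theorem MvPolynomial.homogeneousComponent_mul_of_isHomogeneous {h : MvPolynomial σ R} {m : ℕ}
    (hh : h.IsHomogeneous m) (k : ℕ) (p : MvPolynomial σ R) :
    homogeneousComponent (k + m) (h * p) = h * homogeneousComponent k p := by
  induction p using MvPolynomial.induction_on' with
  | monomial d r =>
    have hd : monomial d r ∈ homogeneousSubmodule σ R d.degree :=
      (mem_homogeneousSubmodule _ _).2 (isHomogeneous_monomial r rfl)
    have hhd : h * monomial d r ∈ homogeneousSubmodule σ R (m + d.degree) :=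
      (mem_homogeneousSubmodule _ _).2 (hh.mul (isHomogeneous_monomial r rfl))
    rw [homogeneousComponent_of_mem hhd, homogeneousComponent_of_mem hd]
    by_cases hk : k = d.degree
    · simp [hk, add_comm]
    · simp [hk, add_comm m]
  | add p q hp hq => rw [mul_add, map_add, map_add, hp, hq, mul_add]

theorem MvPolynomial.mem_smul_top_homogeneousSubmodule {J : Ideal R} {n : ℕ}
    (w : homogeneousSubmodule σ R n) (hw : (w : MvPolynomial σ R) ∈ J.map C) :
    w ∈ J • (⊤ : Submodule R (homogeneousSubmodule σ R n)) := by
  let π : MvPolynomial σ R →ₗ[R] homogeneousSubmodule σ R n :=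
    (homogeneousComponent n).codRestrict _ (homogeneousComponent_mem n)
  have hπ : π w = w := Subtype.ext (homogeneousComponent_eq_self w.2)
  have hw' : (w : MvPolynomial σ R) ∈ J • (⊤ : Submodule R (MvPolynomial σ R)) := by
    rwa [Ideal.smul_top_eq_map, algebraMap_eq]
  rw [← hπ]
  have := Submodule.mem_map_of_mem (f := π) hw'
  rw [Submodule.map_smul''] at this
  exact Submodule.smul_mono le_rfl le_top this

theorem Submodule.prod_mem_smul_top {M N : Type*} [AddCommGroup M] [Module R M] [AddCommGroup N]
    [Module R N] {J : Ideal R} {z : M × N} (hx : z.1 ∈ J • (⊤ : Submodule R M))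
    (hy : z.2 ∈ J • (⊤ : Submodule R N)) : z ∈ J • (⊤ : Submodule R (M × N)) := by
  have hinl := Submodule.mem_map_of_mem (f := LinearMap.inl R M N) hx
  have hinr := Submodule.mem_map_of_mem (f := LinearMap.inr R M N) hy
  rw [Submodule.map_smul''] at hinl hinr
  simpa using add_mem (Submodule.smul_mono le_rfl le_top hinl)
    (Submodule.smul_mono le_rfl le_top hinr)

end Homogeneous

section KoszulComplex

variable {R σ : Type*} [CommRing R] {f g : MvPolynomial σ R} {m k n : ℕ}
  {φ₃ : homogeneousSubmodule σ R m →ₗ[R]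
    homogeneousSubmodule σ R k × homogeneousSubmodule σ R k}
  {φ₂ : homogeneousSubmodule σ R k × homogeneousSubmodule σ R k →ₗ[R] homogeneousSubmodule σ R n}
  {ε : homogeneousSubmodule σ R n →ₗ[R] R}

theorem injective_of_mem_nonZeroDivisors (hf : f ∈ (MvPolynomial σ R)⁰)
    (hφ₃ : ∀ u, ((φ₃ u).1 : MvPolynomial σ R) = -(g * u) ∧
      ((φ₃ u).2 : MvPolynomial σ R) = f * u) :
    Function.Injective φ₃ := by
  refine (injective_iff_map_eq_zero φ₃).2 fun u hu ↦
    Subtype.ext ((mul_left_mem_nonZeroDivisors_eq_zero_iff hf).1 ?_)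
  rw [← (hφ₃ u).2, hu]
  rfl

theorem exact_of_koszul (hk : k = m + 1) (hf : f.IsHomogeneous 1) (hg : g.IsHomogeneous 1)
    (hfg : ∀ a b, f * a + g * b = 0 → ∃ t, a = g * t ∧ b = -(f * t))
    (hφ₃ : ∀ u, ((φ₃ u).1 : MvPolynomial σ R) = -(g * u) ∧
      ((φ₃ u).2 : MvPolynomial σ R) = f * u)
    (hφ₂ : ∀ v, (φ₂ v : MvPolynomial σ R) = f * v.1 + g * v.2) :
    Function.Exact φ₃ φ₂ := by
  subst hk
  refine fun v ↦ ⟨fun hv ↦ ?_, ?_⟩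
  · obtain ⟨t, ht₁, ht₂⟩ := hfg v.1 v.2 (by rw [← hφ₂, hv]; rfl)
    refine ⟨⟨-homogeneousComponent m t, neg_mem (homogeneousComponent_mem m t)⟩, ?_⟩
    refine Prod.ext (Subtype.ext ?_) (Subtype.ext ?_)
    · rw [(hφ₃ _).1, ← homogeneousComponent_eq_self v.1.2, ht₁,
        homogeneousComponent_mul_of_isHomogeneous hg]
      simp
    · rw [(hφ₃ _).2, ← homogeneousComponent_eq_self v.2.2, ht₂, map_neg,
        homogeneousComponent_mul_of_isHomogeneous hf]
      simp
  · rintro ⟨u, rfl⟩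
    refine Subtype.ext ?_
    rw [hφ₂, (hφ₃ u).1, (hφ₃ u).2, ZeroMemClass.coe_zero]
    ring

theorem exact_of_mem_span_of_aeval_eq_zero {v : σ → R} (hn : n = k + 1)
    (hf : f.IsHomogeneous 1) (hg : g.IsHomogeneous 1) (hfv : aeval v f = 0)
    (hgv : aeval v g = 0)
    (hker : ∀ w : MvPolynomial σ R, w.IsHomogeneous n → aeval v w = 0 → w ∈ Ideal.span {f, g})
    (hφ₂ : ∀ u, (φ₂ u : MvPolynomial σ R) = f * u.1 + g * u.2)
    (hε : ∀ w, ε w = aeval v (w : MvPolynomial σ R)) :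
    Function.Exact φ₂ ε := by
  subst hn
  refine fun w ↦ ⟨fun hw ↦ ?_, ?_⟩
  · obtain ⟨a, b, hab⟩ := Ideal.mem_span_pair.1 (hker w w.2 (by rw [← hε, hw]))
    refine ⟨(⟨homogeneousComponent k a, homogeneousComponent_mem k a⟩,
      ⟨homogeneousComponent k b, homogeneousComponent_mem k b⟩), Subtype.ext ?_⟩
    rw [hφ₂, ← homogeneousComponent_eq_self w.2, ← hab, map_add, mul_comm a, mul_comm b,
      homogeneousComponent_mul_of_isHomogeneous hf, homogeneousComponent_mul_of_isHomogeneous hg]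
  · rintro ⟨u, rfl⟩
    rw [hε, hφ₂, map_add, map_mul, map_mul, hfv, hgv, zero_mul, zero_mul, add_zero]

theorem range_eq_span_pow {v : σ → R} (hε : ∀ w, ε w = aeval v (w : MvPolynomial σ R)) :
    LinearMap.range ε = Ideal.span (Set.range v) ^ n := by
  rw [Ideal.span_pow_eq_map_homogeneousSubmodule,
    show ε = (aeval v).toLinearMap ∘ₗ (homogeneousSubmodule σ R n).subtype from LinearMap.ext hε,
    LinearMap.range_comp, Submodule.range_subtype]

theorem range_prod_le_smul_top {J : Ideal R} (hf : f ∈ J.map C) (hg : g ∈ J.map C)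
    (hφ₃ : ∀ u, ((φ₃ u).1 : MvPolynomial σ R) = -(g * u) ∧
      ((φ₃ u).2 : MvPolynomial σ R) = f * u) :
    LinearMap.range φ₃ ≤ J • ⊤ := by
  intro _ hu
  obtain ⟨u, rfl⟩ := LinearMap.mem_range.1 hu
  refine Submodule.prod_mem_smul_top (mem_smul_top_homogeneousSubmodule _ ?_)
    (mem_smul_top_homogeneousSubmodule _ ?_)
  · rw [(hφ₃ u).1]
    exact neg_mem (Ideal.mul_mem_right _ _ hg)
  · rw [(hφ₃ u).2]
    exact Ideal.mul_mem_right _ _ hf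

theorem range_le_smul_top {J : Ideal R} (hf : f ∈ J.map C) (hg : g ∈ J.map C)
    (hφ₂ : ∀ u, (φ₂ u : MvPolynomial σ R) = f * u.1 + g * u.2) :
    LinearMap.range φ₂ ≤ J • ⊤ := by
  intro _ hu
  obtain ⟨u, rfl⟩ := LinearMap.mem_range.1 hu
  refine mem_smul_top_homogeneousSubmodule _ ?_
  rw [hφ₂]
  exact add_mem (Ideal.mul_mem_right _ _ hf) (Ideal.mul_mem_right _ _ hg)

end KoszulComplex

section LinearForm

variable {R : Type*} [CommRing R]

noncomputable def linearForm {σ : Type*} [Fintype σ] (p : σ → R) : MvPolynomial σ R :=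
  ∑ i, C (p i) * X i

variable {σ : Type*} [Fintype σ]

theorem isHomogeneous_linearForm (p : σ → R) : (linearForm p).IsHomogeneous 1 :=
  IsHomogeneous.sum _ _ _ fun i _ ↦ isHomogeneous_C_mul_X (p i) i

theorem aeval_linearForm (p v : σ → R) : aeval v (linearForm p) = p ⬝ᵥ v := by
  simp [linearForm, dotProduct]

theorem coeff_single_linearForm [DecidableEq σ] (p : σ → R) (i : σ) :
    coeff (Finsupp.single i 1) (linearForm p) = p i := by
  simp [linearForm, coeff_sum, coeff_C_mul, coeff_X, Finsupp.single_eq_single_iff]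

theorem linearForm_mem_nonZeroDivisors {k : ℕ} {p : Fin k → R} (i : Fin k) (hi : p i ∈ R⁰) :
    linearForm p ∈ (MvPolynomial (Fin k) R)⁰ :=
  mem_nonZeroDivisors_of_coeff_mem (Finsupp.single i 1) (by rwa [coeff_single_linearForm])

theorem linearForm_mem_map_C {J : Ideal R} {p : σ → R} (hp : ∀ i, p i ∈ J) :
    linearForm p ∈ J.map (C : R →+* MvPolynomial σ R) :=
  Ideal.sum_mem _ fun i _ ↦ Ideal.mul_mem_right _ _ (Ideal.mem_map_of_mem _ (hp i))

theorem C_mul_linearForm_sub_C_mul_linearForm (r s : R) (p q : σ → R) :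
    C r * linearForm p - C s * linearForm q = linearForm (r • p - s • q) := by
  simp [linearForm, Finset.mul_sum, ← Finset.sum_sub_distrib, sub_mul, mul_assoc]

theorem finSuccEquiv_linearForm {n : ℕ} (p : Fin (n + 1) → R) :
    finSuccEquiv R n (linearForm p) =
      Polynomial.C (linearForm (Fin.tail p)) + Polynomial.C (C (p 0)) * Polynomial.X := by
  simp only [linearForm, Fin.sum_univ_succ, map_add, map_sum, map_mul, finSuccEquiv_X_zero,
    finSuccEquiv_X_succ, ← algebraMap_eq, AlgEquiv.commutes, Polynomial.algebraMap_apply,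
    Fin.tail]
  simp [algebraMap_eq, add_comm]

end LinearForm

section TwoLinearForms

variable {R : Type*} [CommRing R] {p q : Fin 3 → R}

theorem isSMulRegular_linearForm_quotient_span_linearForm (hp0 : p 0 ∈ R⁰)
    (hp1 : IsSMulRegular (R ⧸ Ideal.span {p 0}) (p 1))
    (hq0 : IsSMulRegular (R ⧸ Ideal.span {p 0}) (q 0)) (hc : crossProduct q p 2 ∈ R⁰) :
    IsSMulRegular (MvPolynomial (Fin 3) R ⧸ Ideal.span {linearForm p}) (linearForm q) := by
  set u := q 0 • p - p 0 • q
  have hu0 : u 0 = 0 := by simp [u, mul_comm]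
  have hu1 : u 1 = crossProduct q p 2 := by simp [u, cross_apply, mul_comm]
  have hT : IsSMulRegular (MvPolynomial (Fin 2) R ⧸ Ideal.span {linearForm (Fin.tail u)})
      (C (p 0) : MvPolynomial (Fin 2) R) := by
    refine isSMulRegular_quotient_span_swap (C_mem_nonZeroDivisors hp0) ?_
    rw [← map_C_span_singleton]
    refine isSMulRegular_quotient_map_C (Finsupp.single 0 1) ?_
    rw [coeff_single_linearForm]
    refine (hq0.mul hp1).of_sub_mem (Ideal.mem_span_singleton'.2 ⟨q 1, ?_⟩)
    simp only [u, Fin.tail, Fin.succ_zero_eq_one, Pi.sub_apply, Pi.smul_apply, smul_eq_mul]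
    ring
  -- `linearForm u` does not involve `X₀`; modulo it, `f` has the regular `X₀`-coefficient `p 0`
  have hfL : IsSMulRegular (MvPolynomial (Fin 3) R ⧸ Ideal.span {linearForm u})
      (linearForm p) := by
    refine IsSMulRegular.of_quotient_map_equiv (finSuccEquiv R 2) ?_
    rw [Ideal.map_span, Set.image_singleton, finSuccEquiv_linearForm, hu0, C_0,
      Polynomial.C_0, zero_mul, add_zero, ← Set.image_singleton, ← Ideal.map_span]
    refine Polynomial.isSMulRegular_quotient_map_C 1 ?_
    simpa [finSuccEquiv_linearForm] using hT
  have hLf := isSMulRegular_quotient_span_swap (linearForm_mem_nonZeroDivisors 1 (hu1 ▸ hc)) hfL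
  refine (hLf.of_sub_mem (v := -C (p 0) * linearForm q) ?_).of_mul
  refine Ideal.mem_span_singleton'.2 ⟨C (q 0), ?_⟩
  rw [← C_mul_linearForm_sub_C_mul_linearForm]
  ring

theorem isSMulRegular_C_quotient_span_linearForm_pair (hp0 : p 0 ∈ R⁰)
    (hp1 : IsSMulRegular (R ⧸ Ideal.span {p 0}) (p 1))
    (hq0 : IsSMulRegular (R ⧸ Ideal.span {p 0}) (q 0))
    (hp2 : IsSMulRegular (R ⧸ Ideal.span {p 0, q 0}) (p 2)) :
    IsSMulRegular (MvPolynomial (Fin 3) R ⧸ Ideal.span {linearForm p, linearForm q})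
      (C (p 0) : MvPolynomial (Fin 3) R) := by
  have hf : IsSMulRegular (MvPolynomial (Fin 3) R ⧸ Ideal.span {linearForm p})
      (C (p 0) : MvPolynomial (Fin 3) R) := by
    refine isSMulRegular_quotient_span_swap (C_mem_nonZeroDivisors hp0) ?_
    rw [← map_C_span_singleton]
    exact isSMulRegular_quotient_map_C (Finsupp.single 1 1) (by rwa [coeff_single_linearForm])
  have hT : IsSMulRegular (MvPolynomial (Fin 2) R ⧸
      Ideal.span {C (p 0), linearForm (Fin.tail p)}) (C (q 0) : MvPolynomial (Fin 2) R) := by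
    rw [Ideal.span_insert]
    refine IsSMulRegular.quotient_sup_span_swap ?_ ?_
    · rw [← map_C_span_singleton]
      exact isSMulRegular_quotient_map_C 0 (by simpa using hq0)
    · rw [← Ideal.span_insert, ← Set.image_pair, ← Ideal.map_span]
      exact isSMulRegular_quotient_map_C (Finsupp.single 1 1) (by rwa [coeff_single_linearForm])
  -- modulo `p 0` the form `f` does not involve `X₀`, while `g` has `X₀`-coefficient `q 0`
  have hg : IsSMulRegular (MvPolynomial (Fin 3) R ⧸
      (Ideal.span {linearForm p} ⊔ Ideal.span {C (p 0)})) (linearForm q) := by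
    refine IsSMulRegular.of_quotient_map_equiv (finSuccEquiv R 2) ?_
    have hC : finSuccEquiv R 2 (C (p 0)) = Polynomial.C (C (p 0)) := by
      rw [← algebraMap_eq, AlgEquiv.commutes, Polynomial.algebraMap_apply, algebraMap_eq]
    rw [← Ideal.span_insert, Ideal.map_span, Set.image_pair, finSuccEquiv_linearForm, hC,
      mul_comm, Ideal.span_pair_add_mul_right, Ideal.span_pair_comm, ← Set.image_pair,
      ← Ideal.map_span]
    refine Polynomial.isSMulRegular_quotient_map_C 1 ?_
    simpa [finSuccEquiv_linearForm] using hT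
  have := hf.quotient_sup_span_swap hg
  rwa [← Ideal.span_insert] at this

theorem isSMulRegular_C_quotient_span_linearForm (hc : crossProduct q p 2 ∈ R⁰)
    (hb : IsSMulRegular (R ⧸ Ideal.span {crossProduct q p 2}) (crossProduct q p 1)) :
    IsSMulRegular (MvPolynomial (Fin 3) R ⧸ Ideal.span {linearForm (q 0 • p - p 0 • q)})
      (C (crossProduct q p 2) : MvPolynomial (Fin 3) R) := by
  refine isSMulRegular_quotient_span_swap (C_mem_nonZeroDivisors hc) ?_
  rw [← map_C_span_singleton]
  refine isSMulRegular_quotient_map_C (Finsupp.single 2 1) ?_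
  have hu2 : (q 0 • p - p 0 • q) 2 = -1 * crossProduct q p 1 := by
    simp only [Pi.sub_apply, Pi.smul_apply, smul_eq_mul, cross_apply, Matrix.cons_val_one,
      Matrix.cons_val_zero]
    ring
  rw [coeff_single_linearForm, hu2]
  exact (isUnit_one.neg.isSMulRegular _).mul hb

theorem mem_span_linearForm_pair_of_aeval_eq_zero
    (hp : IsSMulRegular (MvPolynomial (Fin 3) R ⧸ Ideal.span {linearForm p, linearForm q})
      (C (p 0) : MvPolynomial (Fin 3) R))
    (hc : IsSMulRegular (MvPolynomial (Fin 3) R ⧸ Ideal.span {linearForm (q 0 • p - p 0 • q)})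
      (C (crossProduct q p 2) : MvPolynomial (Fin 3) R))
    {n : ℕ} {w : MvPolynomial (Fin 3) R} (hw : w.IsHomogeneous n)
    (hv : MvPolynomial.aeval (crossProduct q p) w = 0) :
    w ∈ Ideal.span {linearForm p, linearForm q} := by
  set v := crossProduct q p
  -- `p 0 • X` with `f` subtracted from its first entry, i.e. `X₀` eliminated using `f = 0`
  let ψ : Fin 3 → MvPolynomial (Fin 3) R :=
    fun i ↦ C (p 0) * X i - if i = 0 then linearForm p else 0
  have hA : C (p 0) ^ n * w - MvPolynomial.aeval ψ w ∈ Ideal.span {linearForm p} := by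
    have : C (p 0) ^ n * w = MvPolynomial.aeval (fun i ↦ C (p 0) * X i) w := by
      rw [hw.aeval_mul, aeval_X_left_apply]
    rw [this]
    refine aeval_sub_aeval_mem (fun i ↦ ?_) w
    rw [sub_sub_cancel]
    split_ifs
    · exact Ideal.mem_span_singleton_self _
    · exact zero_mem _
  have hB : MvPolynomial.aeval ψ w ∈ Ideal.span {linearForm (q 0 • p - p 0 • q)} := by
    refine (hc.pow n).mem_of_mul_mem ?_
    have h0 : MvPolynomial.aeval (fun i ↦ (C (p 0) * X 2 * C (v i) : MvPolynomial (Fin 3) R)) w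
        = 0 := by
      rw [hw.aeval_mul, show MvPolynomial.aeval (fun i ↦ (C (v i) : MvPolynomial (Fin 3) R)) w =
        C (MvPolynomial.aeval v w) from aeval_algebraMap_apply _ v w, hv, C_0, mul_zero]
    rw [← hw.aeval_mul, ← sub_zero (MvPolynomial.aeval _ w), ← h0]
    refine aeval_sub_aeval_mem (fun i ↦ ?_) w
    refine Ideal.mem_span_singleton'.2 ⟨![-C (p 1), C (p 0), 0] i, ?_⟩
    fin_cases i <;>
      simp only [ψ, v, linearForm, Fin.sum_univ_three, cross_apply, Pi.sub_apply, Pi.smul_apply,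
        smul_eq_mul, C_sub, C_mul, Fin.zero_eta, Fin.mk_one, Fin.reduceFinMk, Fin.isValue,
        Matrix.cons_val, Matrix.cons_val_zero, Matrix.cons_val_one, Fin.reduceEq, one_ne_zero,
        ↓reduceIte] <;>
      ring
  have hL : linearForm (q 0 • p - p 0 • q) ∈ Ideal.span {linearForm p, linearForm q} := by
    rw [← C_mul_linearForm_sub_C_mul_linearForm]
    exact Ideal.mem_span_pair.2 ⟨C (q 0), -C (p 0), by ring⟩
  refine (hp.pow n).mem_of_mul_mem ?_
  rw [← sub_add_cancel (C (p 0) ^ n * w) (MvPolynomial.aeval ψ w)]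
  exact add_mem (Ideal.span_mono (by simp) hA) ((Ideal.span_singleton_le_iff_mem _).2 hL hB)

/-- Conditions on the coefficient vectors of `f = linearForm p`, `g = linearForm q` making `f, g`
a regular sequence with `p 0` regular modulo `(f, g)`. -/
structure KoszulRegular (p q : Fin 3 → R) : Prop where
  p0 : p 0 ∈ R⁰
  p1 : IsSMulRegular (R ⧸ Ideal.span {p 0}) (p 1)
  q0 : IsSMulRegular (R ⧸ Ideal.span {p 0}) (q 0)
  p2 : IsSMulRegular (R ⧸ Ideal.span {p 0, q 0}) (p 2)
  cross2 : crossProduct q p 2 ∈ R⁰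
  cross1 : IsSMulRegular (R ⧸ Ideal.span {crossProduct q p 2}) (crossProduct q p 1)

theorem KoszulRegular.exists_eq_of_linearForm_mul_add (h : KoszulRegular p q)
    (a b : MvPolynomial (Fin 3) R) (hab : linearForm p * a + linearForm q * b = 0) :
    ∃ t, a = linearForm q * t ∧ b = -(linearForm p * t) :=
  exists_eq_of_mul_add_mul_eq_zero (linearForm_mem_nonZeroDivisors 0 h.p0)
    (isSMulRegular_linearForm_quotient_span_linearForm h.p0 h.p1 h.q0 h.cross2) hab

theorem KoszulRegular.mem_span_of_aeval_eq_zero (h : KoszulRegular p q) {n : ℕ}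
    (w : MvPolynomial (Fin 3) R) (hw : w.IsHomogeneous n)
    (hv : aeval (crossProduct q p) w = 0) : w ∈ Ideal.span {linearForm p, linearForm q} :=
  mem_span_linearForm_pair_of_aeval_eq_zero
    (isSMulRegular_C_quotient_span_linearForm_pair h.p0 h.p1 h.q0 h.p2)
    (isSMulRegular_C_quotient_span_linearForm h.cross2 h.cross1) hw hv

end TwoLinearForms

section SystemOfParameters

open IsLocalRing

variable {R : Type*} [CommRing R] [IsLocalRing R]

theorem radical_eq_maximalIdeal_of_le {I J : Ideal R} (hI : I.radical = maximalIdeal R)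
    (hJ : J ≤ maximalIdeal R) (hIJ : I ≤ J.radical) : J.radical = maximalIdeal R :=
  le_antisymm ((Ideal.radical_mono hJ).trans (maximalIdeal.isMaximal R).isPrime.radical.le)
    (hI ▸ (Ideal.radical_mono hIJ).trans (Ideal.radical_idem J).le)

theorem koszulRegular_pow
    (hCM : ∀ u v w : R, (Ideal.span {u, v, w}).radical = maximalIdeal R →
      RingTheory.Sequence.IsRegular R [u, v, w])
    {x y z : R} (hsop : (Ideal.span {x, y, z}).radical = maximalIdeal R) {α β γ α' β' γ' : ℕ}
    (hα : 0 < α) (hβ : 0 < β) (hγ : 0 < γ) (hβ' : 0 < β') (hγ' : 0 < γ') :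
    KoszulRegular ![x ^ α, y ^ β, z ^ γ] ![y ^ β', z ^ γ', x ^ α'] := by
  obtain ⟨hx, hy, hz⟩ : x ∈ maximalIdeal R ∧ y ∈ maximalIdeal R ∧ z ∈ maximalIdeal R := by
    simpa [← hsop, Set.insert_subset_iff] using (Ideal.subset_span.trans Ideal.le_radical :
      {x, y, z} ⊆ ((Ideal.span {x, y, z}).radical : Set R))
  have hpow {t : R} {k : ℕ} (ht : t ∈ maximalIdeal R) (hk : 0 < k) : t ^ k ∈ maximalIdeal R :=
    Ideal.pow_mem_of_mem _ ht k hk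
  have hrad {s : Set R} {t : R} (k : ℕ) (h : t ^ k ∈ Ideal.span s) :
      t ∈ (Ideal.span s).radical :=
    ⟨k, h⟩
  have hreg {u v w : R} (hu : u ∈ maximalIdeal R) (hv : v ∈ maximalIdeal R)
      (hw : w ∈ maximalIdeal R) (hx : x ∈ (Ideal.span {u, v, w}).radical)
      (hy : y ∈ (Ideal.span {u, v, w}).radical) (hz : z ∈ (Ideal.span {u, v, w}).radical) :=
    (hCM u v w (radical_eq_maximalIdeal_of_le hsop
      (Ideal.span_le.2 (by simp [Set.insert_subset_iff, hu, hv, hw]))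
      (Ideal.span_le.2 (by simp [Set.insert_subset_iff, hx, hy, hz])))).toIsWeaklyRegular
  obtain ⟨h0, h1, -⟩ := (hreg (hpow hx hα) (hpow hy hβ) (hpow hz hγ)
    (hrad α (Ideal.subset_span (by simp))) (hrad β (Ideal.subset_span (by simp)))
    (hrad γ (Ideal.subset_span (by simp)))).regular_mod_of_triple
  obtain ⟨-, h2, h3⟩ := (hreg (hpow hx hα) (hpow hy hβ') (hpow hz hγ)
    (hrad α (Ideal.subset_span (by simp))) (hrad β' (Ideal.subset_span (by simp)))
    (hrad γ (Ideal.subset_span (by simp)))).regular_mod_of_triple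
  set c := y ^ β' * y ^ β - z ^ γ' * x ^ α
  set b := x ^ α' * x ^ α - y ^ β' * z ^ γ
  have hzJ : z ∈ Ideal.span {c, b, z} := Ideal.subset_span (by simp)
  obtain ⟨h4, h5, -⟩ := (hreg (u := c) (v := b) (w := z)
    (sub_mem (Ideal.mul_mem_left _ _ (hpow hy hβ)) (Ideal.mul_mem_left _ _ (hpow hx hα)))
    (sub_mem (Ideal.mul_mem_left _ _ (hpow hx hα)) (Ideal.mul_mem_left _ _ (hpow hz hγ))) hz
    (hrad (α' + α) (by
      rw [show x ^ (α' + α) = b + y ^ β' * z ^ γ by ring]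
      exact add_mem (Ideal.subset_span (by simp))
        (Ideal.mul_mem_left _ _ (Ideal.pow_mem_of_mem _ hzJ γ hγ))))
    (hrad (β' + β) (by
      rw [show y ^ (β' + β) = c + z ^ γ' * x ^ α by ring]
      exact add_mem (Ideal.subset_span (by simp))
        (Ideal.mul_mem_right _ _ (Ideal.pow_mem_of_mem _ hzJ γ' hγ'))))
    (Ideal.le_radical hzJ)).regular_mod_of_triple
  exact ⟨h0, h1, h2, h3, h4, h5⟩

end SystemOfParameters

open IsLocalRing

theorem power_minimal_free_resolution_general
    {R : Type*} [CommRing R] [IsLocalRing R]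
    (hCM : ∀ u v w : R, (Ideal.span {u, v, w}).radical = maximalIdeal R →
      RingTheory.Sequence.IsRegular R [u, v, w])
    (x y z : R) (hsop : (Ideal.span {x, y, z}).radical = maximalIdeal R)
    (α β γ α' β' γ' : ℕ)
    (hα : 0 < α) (hβ : 0 < β) (hγ : 0 < γ)
    (hα' : 0 < α') (hβ' : 0 < β') (hγ' : 0 < γ')
    (a b c : R)
    (ha : a = z ^ (γ + γ') - x ^ α' * y ^ β)
    (hb : b = x ^ (α + α') - y ^ β' * z ^ γ)
    (hc : c = y ^ (β + β') - x ^ α * z ^ γ')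
    (I : Ideal R) (hI : I = Ideal.span {a, b, c})
    (f g : MvPolynomial (Fin 3) R)
    (hf : f = C (x ^ α) * X 0 + C (y ^ β) * X 1 + C (z ^ γ) * X 2)
    (hg : g = C (y ^ β') * X 0 + C (z ^ γ') * X 1 + C (x ^ α') * X 2)
    (n : ℕ) (hn : 2 ≤ n)
    (φ₃ : homogeneousSubmodule (Fin 3) R (n - 2) →ₗ[R]
      homogeneousSubmodule (Fin 3) R (n - 1) × homogeneousSubmodule (Fin 3) R (n - 1))
    (hφ₃ : ∀ u : homogeneousSubmodule (Fin 3) R (n - 2),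
      ((φ₃ u).1 : MvPolynomial (Fin 3) R) = -(g * (u : MvPolynomial (Fin 3) R)) ∧
      ((φ₃ u).2 : MvPolynomial (Fin 3) R) = f * (u : MvPolynomial (Fin 3) R))
    (φ₂ : homogeneousSubmodule (Fin 3) R (n - 1) × homogeneousSubmodule (Fin 3) R (n - 1)
      →ₗ[R] homogeneousSubmodule (Fin 3) R n)
    (hφ₂ : ∀ v : homogeneousSubmodule (Fin 3) R (n - 1) × homogeneousSubmodule (Fin 3) R (n - 1),
      ((φ₂ v : MvPolynomial (Fin 3) R)) =
        f * (v.1 : MvPolynomial (Fin 3) R) + g * (v.2 : MvPolynomial (Fin 3) R))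
    (ε : homogeneousSubmodule (Fin 3) R n →ₗ[R] R)
    (hε : ∀ w : homogeneousSubmodule (Fin 3) R n,
      ε w = MvPolynomial.aeval ![a, b, c] (w : MvPolynomial (Fin 3) R)) :
    Function.Injective φ₃ ∧
      Function.Exact φ₃ φ₂ ∧
      Function.Exact φ₂ ε ∧
      LinearMap.range ε = (I ^ n : Ideal R) ∧
      -- minimality
      LinearMap.range φ₃ ≤ (maximalIdeal R) • ⊤ ∧
      LinearMap.range φ₂ ≤ (maximalIdeal R) • ⊤ ∧
      LinearMap.ker ε ≤ (maximalIdeal R) • ⊤ := by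
  set p : Fin 3 → R := ![x ^ α, y ^ β, z ^ γ]
  set q : Fin 3 → R := ![y ^ β', z ^ γ', x ^ α']
  obtain rfl : f = linearForm p := by simp [hf, linearForm, Fin.sum_univ_three, p]
  obtain rfl : g = linearForm q := by simp [hg, linearForm, Fin.sum_univ_three, q]
  have hv : ![a, b, c] = crossProduct q p := by
    ext i
    fin_cases i <;>
      simp only [p, q, ha, hb, hc, cross_apply, Fin.zero_eta, Fin.mk_one, Fin.reduceFinMk,
        Fin.isValue, Matrix.cons_val, Matrix.cons_val_zero, Matrix.cons_val_one] <;>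
      ring
  rw [hv] at hε
  have hpq : KoszulRegular p q := koszulRegular_pow hCM hsop hα hβ hγ hβ' hγ'
  have hm : ∀ t ∈ ({x, y, z} : Set R), ∀ k, 0 < k → t ^ k ∈ maximalIdeal R := fun t ht k hk ↦
    Ideal.pow_mem_of_mem _ (hsop ▸ Ideal.le_radical (Ideal.subset_span ht)) k hk
  have hfm : linearForm p ∈ (maximalIdeal R).map C := linearForm_mem_map_C fun i ↦ by
    fin_cases i <;> exact hm _ (by simp) _ ‹_›
  have hgm : linearForm q ∈ (maximalIdeal R).map C := linearForm_mem_map_C fun i ↦ by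
    fin_cases i <;> exact hm _ (by simp) _ ‹_›
  have hexact := exact_of_mem_span_of_aeval_eq_zero (by omega) (isHomogeneous_linearForm p)
    (isHomogeneous_linearForm q) (by simp [aeval_linearForm]) (by simp [aeval_linearForm])
    (fun w hw ↦ hpq.mem_span_of_aeval_eq_zero w hw) hφ₂ hε
  refine ⟨injective_of_mem_nonZeroDivisors (linearForm_mem_nonZeroDivisors 0 hpq.p0) hφ₃,
    exact_of_koszul (by omega) (isHomogeneous_linearForm p) (isHomogeneous_linearForm q)
      hpq.exists_eq_of_linearForm_mul_add hφ₃ hφ₂, hexact, ?_,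
    range_prod_le_smul_top hfm hgm hφ₃, range_le_smul_top hfm hgm hφ₂,
    hexact.linearMap_ker_eq.le.trans (range_le_smul_top hfm hgm hφ₂)⟩
  rw [range_eq_span_pow hε, hI, ← hv, Matrix.range_cons, Matrix.range_cons, Matrix.range_cons,
    Matrix.range_empty, Set.union_empty, Set.singleton_union, Set.singleton_union]

/-- For `n ≥ 2` the complex
`0 → S_{n-2} →^{(-g,f)ᵀ} S_{n-1} ⊕ S_{n-1} →^{(f g)} S_n →^ε R`
is acyclic and is a minimal free resolution of `Iⁿ`, where `S_d` is the module
of degree-`d` homogeneous polynomials of `S = R[A,B,C]` and `ε` substitutes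
`a, b, c` for the variables. -/
theorem power_minimal_free_resolution
    {R : Type*} [CommRing R] [IsNoetherianRing R] [IsLocalRing R]
    (hdim : ringKrullDim R = 3)
    (hCM : ∀ u v w : R, (Ideal.span {u, v, w}).radical = maximalIdeal R →
      RingTheory.Sequence.IsRegular R [u, v, w])
    (x y z : R) (hsop : (Ideal.span {x, y, z}).radical = maximalIdeal R)
    (α β γ α' β' γ' : ℕ)
    (hα : 0 < α) (hβ : 0 < β) (hγ : 0 < γ)
    (hα' : 0 < α') (hβ' : 0 < β') (hγ' : 0 < γ')
    (a b c : R)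
    (ha : a = z ^ (γ + γ') - x ^ α' * y ^ β)
    (hb : b = x ^ (α + α') - y ^ β' * z ^ γ)
    (hc : c = y ^ (β + β') - x ^ α * z ^ γ')
    (I : Ideal R) (hI : I = Ideal.span {a, b, c})
    (f g : MvPolynomial (Fin 3) R)
    (hf : f = C (x ^ α) * X 0 + C (y ^ β) * X 1 + C (z ^ γ) * X 2)
    (hg : g = C (y ^ β') * X 0 + C (z ^ γ') * X 1 + C (x ^ α') * X 2)
    (n : ℕ) (hn : 2 ≤ n)
    (φ₃ : homogeneousSubmodule (Fin 3) R (n - 2) →ₗ[R]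
      homogeneousSubmodule (Fin 3) R (n - 1) × homogeneousSubmodule (Fin 3) R (n - 1))
    (hφ₃ : ∀ u : homogeneousSubmodule (Fin 3) R (n - 2),
      ((φ₃ u).1 : MvPolynomial (Fin 3) R) = -(g * (u : MvPolynomial (Fin 3) R)) ∧
      ((φ₃ u).2 : MvPolynomial (Fin 3) R) = f * (u : MvPolynomial (Fin 3) R))
    (φ₂ : homogeneousSubmodule (Fin 3) R (n - 1) × homogeneousSubmodule (Fin 3) R (n - 1)
      →ₗ[R] homogeneousSubmodule (Fin 3) R n)
    (hφ₂ : ∀ v : homogeneousSubmodule (Fin 3) R (n - 1) × homogeneousSubmodule (Fin 3) R (n - 1),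
      ((φ₂ v : MvPolynomial (Fin 3) R)) =
        f * (v.1 : MvPolynomial (Fin 3) R) + g * (v.2 : MvPolynomial (Fin 3) R))
    (ε : homogeneousSubmodule (Fin 3) R n →ₗ[R] R)
    (hε : ∀ w : homogeneousSubmodule (Fin 3) R n,
      ε w = MvPolynomial.aeval ![a, b, c] (w : MvPolynomial (Fin 3) R)) :
    Function.Injective φ₃ ∧
      Function.Exact φ₃ φ₂ ∧
      Function.Exact φ₂ ε ∧
      LinearMap.range ε = (I ^ n : Ideal R) ∧
      -- minimality
      LinearMap.range φ₃ ≤ (maximalIdeal R) • ⊤ ∧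
      LinearMap.range φ₂ ≤ (maximalIdeal R) • ⊤ ∧
      LinearMap.ker ε ≤ (maximalIdeal R) • ⊤ :=
  power_minimal_free_resolution_general hCM x y z hsop α β γ α' β' γ' hα hβ hγ hα' hβ' hγ' a b c ha
    hb hc I hI f g hf hg n hn φ₃ hφ₃ φ₂ hφ₂ ε hε
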